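/- arXiv:1506.02903 — 2 statements merged into one kernel-verified Lean document; each statement's English description precedes it below -/
import Mathlib

section
/- If ρ ≥ 0 satisfies |√(π_i/π̂_i) − 1| ≤ ρ and |√(π̂_i/π_i) − 1| ≤ ρ for all i, then the spectral norm difference between L = Diag(π)^{1/2} P Diag(π)^{-1/2} and L' = Diag(π̂)^{1/2} P Diag(π̂)^{-1/2} satisfies ‖L − L'‖ ≤ (2ρ + ρ²) ‖L‖. -/
/-!
With `D₁ = Diag(√(π̂/π))` and `D₂ = Diag(√(π/π̂))` one has `L' = D₁ L D₂`, hence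
`L - L' = (1 - D₁) L + D₁ L (1 - D₂)`. The spectral norm of a diagonal matrix is its largest
absolute entry, so `‖1 - D₁‖, ‖1 - D₂‖ ≤ ρ` and `‖D₁‖ ≤ 1 + ρ`, which gives
`‖L - L'‖ ≤ (ρ + (1 + ρ) ρ) ‖L‖`.
-/

open Matrix

/-- The spectral (ℓ²-operator) norm of a real matrix. -/
noncomputable def specNorm {d : ℕ} (A : Matrix (Fin d) (Fin d) ℝ) : ℝ :=
  ‖LinearMap.toContinuousLinearMap (Matrix.toEuclideanLin A)‖

open scoped Matrix.Norms.L2Operator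

theorem norm_sub_mul_mul_le {R : Type*} [SeminormedRing R] (a b c : R) :
    ‖a - b * a * c‖ ≤ (‖1 - b‖ + ‖b‖ * ‖1 - c‖) * ‖a‖ := by
  have hsplit : a - b * a * c = (1 - b) * a + b * a * (1 - c) := by noncomm_ring
  calc ‖a - b * a * c‖ ≤ ‖1 - b‖ * ‖a‖ + ‖b‖ * ‖a‖ * ‖1 - c‖ := by
        rw [hsplit]
        exact (norm_add_le _ _).trans (add_le_add (norm_mul_le _ _) norm_mul₃_le)
    _ = (‖1 - b‖ + ‖b‖ * ‖1 - c‖) * ‖a‖ := by ring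

namespace Matrix

variable {n 𝕜 : Type*} [Fintype n] [DecidableEq n] [RCLike 𝕜]

theorem l2_opNorm_one_sub_diagonal_le {v : n → 𝕜} {ρ : ℝ} (hρ : 0 ≤ ρ)
    (hv : ∀ i, ‖v i - 1‖ ≤ ρ) : ‖(1 - diagonal v : Matrix n n 𝕜)‖ ≤ ρ := by
  rw [← diagonal_one, diagonal_sub, l2_opNorm_diagonal, pi_norm_le_iff_of_nonneg hρ]
  exact fun i => by simpa only [norm_sub_rev] using hv i

theorem l2_opNorm_diagonal_le_one_add {v : n → 𝕜} {ρ : ℝ} (hρ : 0 ≤ ρ)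
    (hv : ∀ i, ‖v i - 1‖ ≤ ρ) : ‖(diagonal v : Matrix n n 𝕜)‖ ≤ 1 + ρ := by
  rw [l2_opNorm_diagonal, pi_norm_le_iff_of_nonneg (by positivity)]
  intro i
  calc ‖v i‖ ≤ ‖(1 : 𝕜)‖ + ‖v i - 1‖ := norm_le_norm_add_norm_sub' _ _
    _ ≤ 1 + ρ := by rw [norm_one]; linarith [hv i]

end Matrix

theorem conjugation_perturbation_general {d : ℕ} (P : Matrix (Fin d) (Fin d) ℝ)
    (π πh : Fin d → ℝ) (ρ : ℝ) (hρ : 0 ≤ ρ)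
    (hπpos : ∀ i, 0 < π i)
    (hratio1 : ∀ i, |Real.sqrt (π i / πh i) - 1| ≤ ρ)
    (hratio2 : ∀ i, |Real.sqrt (πh i / π i) - 1| ≤ ρ)
    (L L' : Matrix (Fin d) (Fin d) ℝ)
    (hL : L = Matrix.diagonal (fun i => Real.sqrt (π i)) * P *
      Matrix.diagonal (fun i => (Real.sqrt (π i))⁻¹))
    (hL' : L' = Matrix.diagonal (fun i => Real.sqrt (πh i)) * P *
      Matrix.diagonal (fun i => (Real.sqrt (πh i))⁻¹)) :
    specNorm (L - L') ≤ (2 * ρ + ρ ^ 2) * specNorm L := by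
  set D₁ : Matrix (Fin d) (Fin d) ℝ := diagonal fun i => √(πh i / π i)
  set D₂ : Matrix (Fin d) (Fin d) ℝ := diagonal fun i => √(π i / πh i)
  have hsqrt_ne : ∀ i, √(π i) ≠ 0 := fun i => (Real.sqrt_pos.mpr (hπpos i)).ne'
  have hleft : (fun i => √(πh i)) = fun i => √(πh i / π i) * √(π i) := funext fun i => by
    rw [Real.sqrt_div' _ (hπpos i).le, div_mul_cancel₀ _ (hsqrt_ne i)]
  have hright : (fun i => (√(πh i))⁻¹) = fun i => (√(π i))⁻¹ * √(π i / πh i) := funext fun i => by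
    rw [Real.sqrt_div (hπpos i).le, div_eq_mul_inv, inv_mul_cancel_left₀ (hsqrt_ne i)]
  have hL'_eq : L' = D₁ * L * D₂ := by
    rw [hL', hL, hleft, hright, ← diagonal_mul_diagonal, ← diagonal_mul_diagonal]
    simp only [D₁, D₂, Matrix.mul_assoc]
  calc specNorm (L - L') = ‖L - D₁ * L * D₂‖ := by rw [hL'_eq]; rfl
    _ ≤ (‖1 - D₁‖ + ‖D₁‖ * ‖1 - D₂‖) * ‖L‖ := norm_sub_mul_mul_le L D₁ D₂
    _ ≤ (ρ + (1 + ρ) * ρ) * ‖L‖ := by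
        gcongr
        · exact l2_opNorm_one_sub_diagonal_le hρ hratio2
        · exact l2_opNorm_diagonal_le_one_add hρ hratio2
        · exact l2_opNorm_one_sub_diagonal_le hρ hratio1
    _ = (2 * ρ + ρ ^ 2) * ‖L‖ := by ring

/-- If the square-root ratios of `π` and `π̂` deviate from 1 by at most `ρ`, then the two
diagonal conjugations of `P` satisfy `‖L - L'‖ ≤ (2ρ + ρ²)‖L‖` in spectral norm. -/
theorem conjugation_perturbation {d : ℕ} (P : Matrix (Fin d) (Fin d) ℝ)
    (π πh : Fin d → ℝ) (ρ : ℝ) (hρ : 0 ≤ ρ)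
    (hπpos : ∀ i, 0 < π i) (hπhpos : ∀ i, 0 < πh i)
    (hratio1 : ∀ i, |Real.sqrt (π i / πh i) - 1| ≤ ρ)
    (hratio2 : ∀ i, |Real.sqrt (πh i / π i) - 1| ≤ ρ)
    (L L' : Matrix (Fin d) (Fin d) ℝ)
    (hL : L = Matrix.diagonal (fun i => Real.sqrt (π i)) * P *
      Matrix.diagonal (fun i => (Real.sqrt (π i))⁻¹))
    (hL' : L' = Matrix.diagonal (fun i => Real.sqrt (πh i)) * P *
      Matrix.diagonal (fun i => (Real.sqrt (πh i))⁻¹)) :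
    specNorm (L - L') ≤ (2 * ρ + ρ ^ 2) * specNorm L :=
  conjugation_perturbation_general P π πh ρ hρ hπpos hratio1 hratio2 L L' hL hL'
end

section
/- Solving a self-bounding quadratic inequality: if p̂, p ∈ [0,1] and n ≥ 1 satisfy |p̂ − p| ≤ √(2 p(1−p) τ / n) + (2/3) τ / n for some τ ≥ 0, then p ≤ p̂ + √(2 p̂(1−p̂) τ / n) + C τ / n for a universal constant C (one may take C = 4), i.e., the non-observable bound can be converted into an observable one. -/
set_option maxHeartbeats 1600000 in
/-- Solving a self-bounding quadratic inequality: a Bernstein-type bound with the unknown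
variance `p(1-p)` can be converted into one with the observable variance `p̂(1-p̂)`,
with universal constant `C = 4`. -/
theorem self_bounding_quadratic (p ph : ℝ) (n : ℕ) (τ : ℝ)
    (hp0 : 0 ≤ p) (hp1 : p ≤ 1) (hph0 : 0 ≤ ph) (hph1 : ph ≤ 1)
    (hn : 1 ≤ n) (hτ : 0 ≤ τ)
    (h : |ph - p| ≤ Real.sqrt (2 * p * (1 - p) * τ / n) + (2 / 3) * τ / n) :
    p ≤ ph + Real.sqrt (2 * ph * (1 - ph) * τ / n) + 4 * τ / n := by
  have hn' : (1:ℝ) ≤ (n:ℝ) := by exact_mod_cast hn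
  have hnpos : (0:ℝ) < (n:ℝ) := by linarith
  set t : ℝ := τ / n with htdef
  have ht : 0 ≤ t := div_nonneg hτ (le_of_lt hnpos)
  clear_value t
  have hA : 0 ≤ p * (1 - p) := mul_nonneg hp0 (by linarith)
  have hB : 0 ≤ ph * (1 - ph) := mul_nonneg hph0 (by linarith)
  set V : ℝ := Real.sqrt (p * (1 - p)) with hVdef
  set W : ℝ := Real.sqrt (ph * (1 - ph)) with hWdef
  set s : ℝ := Real.sqrt t with hsdef
  set r2 : ℝ := Real.sqrt 2 with hr2def
  have hV0 : 0 ≤ V := Real.sqrt_nonneg _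
  have hW0 : 0 ≤ W := Real.sqrt_nonneg _
  have hs0 : 0 ≤ s := Real.sqrt_nonneg _
  have hr20 : 0 ≤ r2 := Real.sqrt_nonneg _
  have hV2 : V ^ 2 = p * (1 - p) := Real.sq_sqrt hA
  have hW2 : W ^ 2 = ph * (1 - ph) := Real.sq_sqrt hB
  have hs2 : s ^ 2 = t := Real.sq_sqrt ht
  have hr22 : r2 ^ 2 = 2 := Real.sq_sqrt (by norm_num)
  -- rewrite the sqrt terms
  have hsq1 : Real.sqrt (2 * p * (1 - p) * τ / n) = r2 * V * s := by
    have : 2 * p * (1 - p) * τ / n = 2 * (p * (1 - p)) * t := by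
      rw [htdef]; ring
    rw [this, Real.sqrt_mul (by positivity), Real.sqrt_mul (by norm_num : (0:ℝ) ≤ 2)]
  have hsq2 : Real.sqrt (2 * ph * (1 - ph) * τ / n) = r2 * W * s := by
    have : 2 * ph * (1 - ph) * τ / n = 2 * (ph * (1 - ph)) * t := by
      rw [htdef]; ring
    rw [this, Real.sqrt_mul (by positivity), Real.sqrt_mul (by norm_num : (0:ℝ) ≤ 2)]
  clear_value V W s r2
  rw [hsq1] at h
  have ht23 : (2 / 3) * τ / n = (2 / 3) * t := by rw [htdef]; ring
  rw [ht23] at h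
  have h1 : p - ph ≤ r2 * V * s + (2 / 3) * t := by
    have := neg_le_of_abs_le h
    linarith
  have h2 : ph - p ≤ r2 * V * s + (2 / 3) * t := le_of_abs_le h
  -- key: V² ≤ W² + r2 V s + (2/3) t
  have hkey : V ^ 2 ≤ W ^ 2 + r2 * V * s + (2 / 3) * t := by
    rw [hV2, hW2]
    have hd : p * (1 - p) - ph * (1 - ph) = (p - ph) * (1 - p - ph) := by ring
    rcases le_total p ph with hle | hle
    · nlinarith [mul_nonneg (mul_nonneg hr20 hV0) hs0]
    · nlinarith [mul_nonneg (mul_nonneg hr20 hV0) hs0]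
  -- deduce V ≤ W + (r2/2 + q) s where q = √(7/6)
  set q : ℝ := Real.sqrt (7 / 6) with hqdef
  have hq0 : 0 ≤ q := Real.sqrt_nonneg _
  have hq2 : q ^ 2 = 7 / 6 := Real.sq_sqrt (by norm_num)
  clear_value q
  have e1 : (V - r2 * s / 2) ^ 2 = V ^ 2 - r2 * V * s + (1 / 2) * s ^ 2 := by
    linear_combination (s ^ 2 / 4) * hr22
  have e2 : (W + q * s) ^ 2 = W ^ 2 + 2 * q * W * s + (7 / 6) * s ^ 2 := by
    linear_combination s ^ 2 * hq2
  have hx2 : (V - r2 * s / 2) ^ 2 ≤ (W + q * s) ^ 2 := by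
    rw [e1, e2]
    have hq3 : 0 ≤ q * W * s := mul_nonneg (mul_nonneg hq0 hW0) hs0
    linarith [hkey, hs2]
  have h5 : V - r2 * s / 2 ≤ W + q * s := by
    calc V - r2 * s / 2 ≤ |V - r2 * s / 2| := le_abs_self _
      _ = Real.sqrt ((V - r2 * s / 2) ^ 2) := (Real.sqrt_sq_eq_abs _).symm
      _ ≤ Real.sqrt ((W + q * s) ^ 2) := Real.sqrt_le_sqrt hx2
      _ = |W + q * s| := Real.sqrt_sq_eq_abs _
      _ = W + q * s := abs_of_nonneg (by positivity)
  have hVW : V ≤ W + (r2 / 2 + q) * s := by linarith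
  -- r2 * q = √(7/3) ≤ 7/3
  have hr2q : r2 * q ≤ 7 / 3 := by
    have hsq : (r2 * q) ^ 2 = 7 / 3 := by
      have : (r2 * q) ^ 2 = r2 ^ 2 * q ^ 2 := by ring
      rw [this, hr22, hq2]; norm_num
    calc r2 * q ≤ |r2 * q| := le_abs_self _
      _ = Real.sqrt ((r2 * q) ^ 2) := (Real.sqrt_sq_eq_abs _).symm
      _ ≤ Real.sqrt ((7 / 3 : ℝ) ^ 2) := by
          apply Real.sqrt_le_sqrt; rw [hsq]; norm_num
      _ = 7 / 3 := by rw [Real.sqrt_sq]; norm_num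
  -- finish
  rw [hsq2]
  have h4t : 4 * τ / n = 4 * t := by rw [htdef]; ring
  rw [h4t]
  have hfinal : r2 * V * s ≤ r2 * W * s + (1 + r2 * q) * t := by
    have hm := mul_le_mul_of_nonneg_left (mul_le_mul_of_nonneg_right hVW hs0) hr20
    have hexp : r2 * ((W + (r2 / 2 + q) * s) * s) = r2 * W * s + (1 + r2 * q) * t := by
      have h9 : r2 * ((W + (r2 / 2 + q) * s) * s)
          = r2 * W * s + (r2 ^ 2 / 2) * s ^ 2 + (r2 * q) * s ^ 2 := by ring
      rw [h9, hr22, hs2]; ring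
    rw [hexp] at hm
    linarith
  have hlast : (0:ℝ) ≤ (7 / 3 - r2 * q) * t :=
    mul_nonneg (by linarith) ht
  linarith [h1, hfinal, hlast]
end
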